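/- Key Lemma: let v = (v_1,…,v_n) be a valuation profile, and suppose the payment rule is discriminatory price dominated, i.e., the utility satisfies u_i^{v_i}(b) ≥ v_i(x_i(b)) − Σ_{j=1}^{x_i(b)} b_i(j) for every profile b and bidder i. For a bidder i with x_i^v ≥ 1 let τ_i ∈ {1,…,x_i^v} be a minimizer of v_i(j)/j over j ∈ {1,…,x_i^v}. Then for every bidder i with x_i^v ≥ 1, every bid sub-profile b_{−i}, and every α > 0, there exists a probability distribution D over uniform bid vectors, each element of its support bidding a common value t·v_i(τ_i)/τ_i with t ∈ [0, 1 − e^{−1/α}] on the first x_i^v entries and 0 afterwards, such that E_{b'_i∼D}[u_i^{v_i}(b'_i, b_{−i})] ≥ α(1 − e^{−1/α})·x_i^v·(v_i(τ_i)/τ_i) − α·Σ_{j=1}^{x_i^v} β_j(b_{−i}). -/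

import Mathlib

open Finset MeasureTheory

noncomputable section

/-- A bid vector for an auction of `k` units: entry `j` is the `(j+1)`-st marginal bid. -/
abbrev Bid (k : ℕ) := Fin k → ℝ

/-- Standard bid vectors: non-increasing and non-negative. -/
def StdBid {k : ℕ} (b : Bid k) : Prop :=
  (∀ j j' : Fin k, j ≤ j' → b j' ≤ b j) ∧ ∀ j, 0 ≤ b j

/-- Uniform bid vectors: a common value `c ≥ 0` on the first `q ≤ k` entries, `0` afterwards. -/
def UnifBid {k : ℕ} (b : Bid k) : Prop :=
  ∃ c : ℝ, 0 ≤ c ∧ ∃ q : ℕ, q ≤ k ∧ ∀ j : Fin k, b j = if (j : ℕ) < q then c else 0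

/-- A valuation on `{0,…,k}`: zero at `0`, non-negative and non-decreasing (up to `k`). -/
def IsValuation (k : ℕ) (v : ℕ → ℝ) : Prop :=
  v 0 = 0 ∧ (∀ x, 0 ≤ v x) ∧ ∀ x y : ℕ, x ≤ y → y ≤ k → v x ≤ v y

/-- Submodularity: non-increasing marginal values `v j - v (j-1)`. -/
def SubmodularVal (k : ℕ) (v : ℕ → ℝ) : Prop :=
  ∀ x y : ℕ, 1 ≤ x → x < y → y ≤ k → v y - v (y - 1) ≤ v x - v (x - 1)

/-- Subadditivity. -/
def SubadditiveVal (k : ℕ) (v : ℕ → ℝ) : Prop :=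
  ∀ x y : ℕ, x + y ≤ k → v (x + y) ≤ v x + v y

/-- `x` is a valid allocation for the bidding profile `b`:
all `k` units are allocated, and every winning bid is at least every losing bid. -/
def ValidAlloc {n k : ℕ} (b : Fin n → Bid k) (x : Fin n → ℕ) : Prop :=
  (∑ i, x i) = k ∧
  ∀ i i' : Fin n, ∀ j j' : Fin k, (j : ℕ) < x i → x i' ≤ (j' : ℕ) → b i' j' ≤ b i j

/-- The sum of the first `x` entries of a bid vector. -/
def winSum {k : ℕ} (b : Bid k) (x : ℕ) : ℝ :=
  ∑ j : Fin k, if (j : ℕ) < x then b j else 0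

/-- No-overbidding of the bid vector `b` with respect to the valuation `v`. -/
def NoOverbid {k : ℕ} (v : ℕ → ℝ) (b : Bid k) : Prop :=
  ∀ s : ℕ, 1 ≤ s → s ≤ k → winSum b s ≤ v s

/-- The `j`-th highest element of a multiset of reals (`j` is 1-indexed; default `0`). -/
def kthHighest (s : Multiset ℝ) (j : ℕ) : ℝ :=
  ((s.sort (· ≤ ·)).reverse).getD (j - 1) 0

/-- The multiset of all bids submitted under the profile `b`. -/
def allBids {n k : ℕ} (b : Fin n → Bid k) : Multiset ℝ :=
  (Finset.univ : Finset (Fin n × Fin k)).val.map fun p => b p.1 p.2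

/-- The multiset of all bids submitted by the bidders other than `i`. -/
def othersBids {n k : ℕ} (b : Fin n → Bid k) (i : Fin n) : Multiset ℝ :=
  ((Finset.univ : Finset (Fin n × Fin k)).filter (fun p => p.1 ≠ i)).val.map
    fun p => b p.1 p.2

/-- `β_j` (1-indexed): the `j`-th lowest among the `k` highest elements of `s`,
i.e. the `(k+1-j)`-th highest element of `s`. -/
def betaBid (k : ℕ) (s : Multiset ℝ) (j : ℕ) : ℝ := kthHighest s (k + 1 - j)

/-- `∑_{j=1}^{x} β_j(s)`. -/
def betaSum (k : ℕ) (s : Multiset ℝ) (x : ℕ) : ℝ := ∑ j ∈ Finset.Icc 1 x, betaBid k s j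

/-- The uniform price: the `(k+1)`-st highest of all submitted bids (`0` by default). -/
def price {n k : ℕ} (b : Fin n → Bid k) : ℝ := kthHighest (allBids b) (k + 1)

/-- Discriminatory-pricing utility of bidder `i` under the allocation rule `X`. -/
def uDisc {n k : ℕ} (X : (Fin n → Bid k) → Fin n → ℕ) (v : ℕ → ℝ) (i : Fin n)
    (b : Fin n → Bid k) : ℝ :=
  v (X b i) - winSum (b i) (X b i)

/-- Uniform-pricing utility of bidder `i` under the allocation rule `X`. -/
def uUnif {n k : ℕ} (X : (Fin n → Bid k) → Fin n → ℕ) (v : ℕ → ℝ) (i : Fin n)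
    (b : Fin n → Bid k) : ℝ :=
  v (X b i) - (X b i : ℝ) * price b

/-- The `x`-th entry (1-indexed) of a bid vector, with the convention that it is `0`
for `x = 0` (or `x > k`). -/
def lastWinBid {k : ℕ} (b : Bid k) (x : ℕ) : ℝ :=
  if h : 1 ≤ x ∧ x ≤ k then b ⟨x - 1, by omega⟩ else 0

/-- Social welfare of the allocation `x` under the valuation profile `v`. -/
def SW {n : ℕ} (v : Fin n → ℕ → ℝ) (x : Fin n → ℕ) : ℝ := ∑ i, v i (x i)

/-!
Bidding `t·w`, with `w = vᵢ(τᵢ)/τᵢ`, on the first `m = xᵢ^v` units wins at least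
`N(t) = #{j ≤ m | β_j < t·w}` units: if bidder `i` won `x < N(t)` units, its losing bid `t·w`
would be beaten by all `k - x` units won by the others, forcing `β_{x+1} ≥ t·w`. Since
`vᵢ(j) ≥ j·w` for `j ≤ m` and each won unit costs `t·w`, the deviation earns at least
`N(t)·w·(1 - t)`. The density `α/(1 - t)` is a probability density on `[0, 1 - e^{-1/α}]`, and
averaging against it turns this bound into `α·w·∫ N ≥ α(1 - e^{-1/α})·m·w - α·∑ β_j`; hence some
single `t` attains the bound, and its Dirac distribution is the required `D`.
-/

lemma sortedGE_reverse_sort {α : Type*} [LinearOrder α] (s : Multiset α) :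
    (s.sort (· ≤ ·)).reverse.SortedGE :=
  (List.Pairwise.sortedLE (s.pairwise_sort _)).reverse

section OrderStatistics

variable {s : Multiset ℝ}

lemma kthHighest_nonneg (hs : ∀ x ∈ s, 0 ≤ x) (r : ℕ) : 0 ≤ kthHighest s r := by
  unfold kthHighest
  rcases lt_or_ge (r - 1) (s.sort (· ≤ ·)).reverse.length with h | h
  · rw [List.getD_eq_getElem _ _ h]
    exact hs _ ((Multiset.mem_sort _).1 (List.mem_reverse.1 (List.getElem_mem h)))
  · rw [List.getD_eq_default _ _ h]

-- Past the end of the sorted list `kthHighest` returns the default `0`, hence the sign condition.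
lemma kthHighest_antitone (hs : ∀ x ∈ s, 0 ≤ x) : Antitone (kthHighest s) := by
  intro r r' hrr'
  rcases lt_or_ge (r' - 1) (s.sort (· ≤ ·)).reverse.length with h | h
  · unfold kthHighest
    rw [List.getD_eq_getElem _ _ h, List.getD_eq_getElem _ _ (by omega)]
    exact (sortedGE_reverse_sort s).getElem_ge_getElem_of_le (by omega)
  · rw [kthHighest, List.getD_eq_default _ _ h]
    exact kthHighest_nonneg hs r

lemma le_kthHighest_of_le_card_filter {c : ℝ} {r : ℕ} (hr : 1 ≤ r)
    (hcard : r ≤ Multiset.card (s.filter (c ≤ ·))) : c ≤ kthHighest s r := by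
  set l := (s.sort (· ≤ ·)).reverse
  have hcount : Multiset.card (s.filter (c ≤ ·)) = l.countP (c ≤ ·) := by
    conv_lhs => rw [← Multiset.sort_eq s (· ≤ ·), ← Multiset.coe_reverse]
    rw [Multiset.filter_coe, Multiset.coe_card, List.countP_eq_length_filter]
  have hlen : r - 1 < l.length := by
    have := l.countP_le_length (p := (c ≤ ·))
    omega
  by_contra! hlt
  rw [kthHighest, List.getD_eq_getElem _ _ hlen] at hlt
  have hdrop : (l.drop (r - 1)).countP (c ≤ ·) = 0 := by
    refine List.countP_eq_zero.2 fun x hx => ?_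
    obtain ⟨p, hp, rfl⟩ := List.getElem_of_mem hx
    rw [List.getElem_drop]
    have hle := (sortedGE_reverse_sort s).getElem_ge_getElem_of_le
      (hi := by rw [List.length_drop] at hp; change _ < l.length; omega) (hj := hlen)
      (Nat.le_add_right (r - 1) p)
    simp only [decide_eq_true_eq, not_le]
    exact hle.trans_lt hlt
  have htake := (l.take (r - 1)).countP_le_length (p := (c ≤ ·))
  rw [← List.take_append_drop (r - 1) l, List.countP_append, hdrop] at hcount
  simp only [List.length_take] at htake
  omega

lemma betaBid_nonneg (hs : ∀ x ∈ s, 0 ≤ x) (k j : ℕ) : 0 ≤ betaBid k s j :=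
  kthHighest_nonneg hs _

lemma betaBid_monotone (hs : ∀ x ∈ s, 0 ≤ x) (k : ℕ) : Monotone (betaBid k s) :=
  Antitone.comp (kthHighest_antitone hs) fun _ _ h => by omega

end OrderStatistics

lemma le_of_sum_eq {n k : ℕ} {x : Fin n → ℕ} (hx : ∑ a, x a = k) (i : Fin n) : x i ≤ k :=
  hx ▸ single_le_sum (fun _ _ => Nat.zero_le _) (mem_univ i)

lemma natCast_mul_le_of_le_div {v : ℕ → ℝ} (hv : ∀ j, 0 ≤ v j) {m : ℕ} {w : ℝ}
    (h : ∀ j ∈ Icc 1 m, w ≤ v j / j) (j : ℕ) (hj : j ≤ m) : (j : ℝ) * w ≤ v j := by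
  rcases j.eq_zero_or_pos with rfl | hj0
  · simpa using hv 0
  · rw [mul_comm, ← le_div_iff₀ (by positivity)]
    exact h j (mem_Icc.2 ⟨hj0, hj⟩)

lemma card_filter_Icc_lt_le {f : ℕ → ℝ} (hf : Monotone f) {c : ℝ} {j : ℕ} (hj : c ≤ f j)
    (m : ℕ) : #{j' ∈ Icc 1 m | f j' < c} ≤ j - 1 :=
  calc #{j' ∈ Icc 1 m | f j' < c} ≤ #(Icc 1 (j - 1)) := card_le_card fun j' hj' => by
        simp only [mem_filter, mem_Icc] at hj' ⊢
        have : j' < j := lt_of_not_ge fun h => (hj.trans (hf h)).not_gt hj'.2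
        omega
    _ = j - 1 := by simp

section Auction

variable {n k : ℕ}

def uniformBid (k m : ℕ) (c : ℝ) : Bid k := fun j => if (j : ℕ) < m then c else 0

lemma winSum_uniformBid {m x : ℕ} (hx : x ≤ k) (c : ℝ) :
    winSum (uniformBid k m c) x = (min x m : ℕ) * c := by
  simp only [winSum, uniformBid, ← ite_and, ← lt_min_iff]
  rw [← Finset.sum_filter, sum_const, nsmul_eq_mul, Fin.card_filter_val_lt,
    min_eq_right ((min_le_left _ _).trans hx)]

lemma othersBids_update_self (b : Fin n → Bid k) (i : Fin n) (c : Bid k) :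
    othersBids (Function.update b i c) i = othersBids b i :=
  Multiset.map_congr rfl fun p hp => by rw [Function.update_of_ne (Finset.mem_filter.1 hp).2]

lemma othersBids_nonneg {b : Fin n → Bid k} {i : Fin n} (hb : ∀ j, j ≠ i → StdBid (b j)) :
    ∀ y ∈ othersBids b i, 0 ≤ y := by
  intro y hy
  obtain ⟨p, hp, rfl⟩ := Multiset.mem_map.1 hy
  exact (hb p.1 (Finset.mem_filter.1 hp).2).2 p.2

lemma card_othersWinning {x : Fin n → ℕ} (hx : ∑ a, x a = k) (i : Fin n) :
    #{p : Fin n × Fin k | p.1 ≠ i ∧ (p.2 : ℕ) < x p.1} = k - x i := by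
  have hrow : ∀ a, #{j : Fin k | a ≠ i ∧ (j : ℕ) < x a} = if a = i then 0 else x a := by
    intro a
    by_cases ha : a = i
    · simp [ha]
    · simp [ha, Fin.card_filter_val_lt, le_of_sum_eq hx a]
  rw [card_filter, Fintype.sum_prod_type]
  simp only [← card_filter, hrow]
  rw [sum_ite, sum_const_zero, zero_add, filter_ne', ← hx, ← add_sum_erase _ _ (mem_univ i),
    Nat.add_sub_cancel_left]

lemma ValidAlloc.le_betaBid_othersBids {b : Fin n → Bid k} {x : Fin n → ℕ}
    (hX : ValidAlloc b x) (i : Fin n) (hxk : x i < k) :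
    b i ⟨x i, hxk⟩ ≤ betaBid k (othersBids b i) (x i + 1) := by
  obtain ⟨hsum, hwin⟩ := hX
  rw [betaBid, show k + 1 - (x i + 1) = k - x i by omega]
  refine le_kthHighest_of_le_card_filter (by omega) ?_
  rw [← card_othersWinning hsum i, othersBids, Multiset.filter_map, Multiset.card_map,
    ← Finset.filter_val, ← Finset.card_def]
  refine card_le_card fun p hp => ?_
  simp only [mem_filter, mem_univ, true_and, Function.comp_apply] at hp ⊢
  exact ⟨hp.1, hwin p.1 i p.2 ⟨x i, hxk⟩ hp.2 le_rfl⟩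

lemma card_betaBid_lt_le_of_uniformBid {b : Fin n → Bid k} {x : Fin n → ℕ}
    (hX : ValidAlloc b x) {i : Fin n} (hs : ∀ y ∈ othersBids b i, 0 ≤ y) {m : ℕ} (hm : m ≤ k)
    {c : ℝ} (hbi : b i = uniformBid k m c) :
    #{j ∈ Icc 1 m | betaBid k (othersBids b i) j < c} ≤ x i := by
  by_contra! hlt
  have hN : #{j ∈ Icc 1 m | betaBid k (othersBids b i) j < c} ≤ m :=
    (card_filter_le _ _).trans (by simp)
  have hxk : x i < k := by omega
  have hlose : b i ⟨x i, hxk⟩ = c := by rw [hbi, uniformBid, if_pos (by simp; omega)]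
  have := card_filter_Icc_lt_le (betaBid_monotone hs k)
    (hlose ▸ hX.le_betaBid_othersBids i hxk) m
  omega

lemma min_mul_le_sub_winSum_uniformBid {v : ℕ → ℝ} (hv : IsValuation k v) {m x : ℕ}
    (hx : x ≤ k) {w : ℝ} (hvw : ∀ j ≤ m, (j : ℝ) * w ≤ v j) (t : ℝ) :
    ((min x m : ℕ) : ℝ) * (w * (1 - t)) ≤ v x - winSum (uniformBid k m (t * w)) x := by
  have hmono := hv.2.2 (min x m) x (min_le_left _ _) hx
  have hlow := hvw (min x m) (min_le_right _ _)
  rw [winSum_uniformBid hx]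
  linarith

lemma card_betaBid_lt_mul_le_uDisc_update_uniformBid {X : (Fin n → Bid k) → Fin n → ℕ}
    (hX : ∀ b, ValidAlloc b (X b)) {v : ℕ → ℝ} (hv : IsValuation k v) {b : Fin n → Bid k}
    {i : Fin n} (hs : ∀ y ∈ othersBids b i, 0 ≤ y) {m : ℕ} (hm : m ≤ k) {w t : ℝ} (hw : 0 ≤ w)
    (ht : t ≤ 1) (hvw : ∀ j ≤ m, (j : ℝ) * w ≤ v j) :
    #{j ∈ Icc 1 m | betaBid k (othersBids b i) j < t * w} * (w * (1 - t))
      ≤ uDisc X v i (Function.update b i (uniformBid k m (t * w))) := by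
  set b' := Function.update b i (uniformBid k m (t * w))
  have hs' : othersBids b' i = othersBids b i := othersBids_update_self b i _
  have hbi : b' i = uniformBid k m (t * w) := Function.update_self _ _ _
  have hwin := card_betaBid_lt_le_of_uniformBid (hX b') (hs' ▸ hs) hm hbi
  rw [hs'] at hwin
  calc _ ≤ ((min (X b' i) m : ℕ) : ℝ) * (w * (1 - t)) := by
        gcongr
        exact le_min hwin ((card_filter_le _ _).trans (by simp))
    _ ≤ v (X b' i) - winSum (b' i) (X b' i) := by
        rw [hbi]
        exact min_mul_le_sub_winSum_uniformBid hv (le_of_sum_eq (hX b').1 i) hvw t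

end Auction

section Averaging

lemma integral_inv_one_sub {T : ℝ} (hT : T < 1) :
    ∫ t in (0 : ℝ)..T, (1 - t)⁻¹ = -Real.log (1 - T) := by
  rw [intervalIntegral.integral_comp_sub_left (fun t => t⁻¹), sub_zero,
    integral_inv_of_pos (by linarith) one_pos, one_div, Real.log_inv]

lemma intervalIntegrable_indicator_Ioi_one (c a b : ℝ) :
    IntervalIntegrable ((Set.Ioi c).indicator fun _ => (1 : ℝ)) volume a b :=
  intervalIntegrable_iff.2
    (IntegrableOn.indicator (integrableOn_const measure_Ioc_lt_top.ne) measurableSet_Ioi)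

lemma sub_le_integral_indicator_Ioi_one {c T : ℝ} (hc : 0 ≤ c) (hT : 0 ≤ T) :
    T - c ≤ ∫ t in (0 : ℝ)..T, (Set.Ioi c).indicator (fun _ => (1 : ℝ)) t := by
  rw [intervalIntegral.integral_of_le hT, integral_indicator_const _ measurableSet_Ioi,
    measureReal_restrict_apply measurableSet_Ioi, Set.inter_comm, Set.Ioc_inter_Ioi,
    max_eq_right hc, Real.volume_real_Ioc, smul_eq_mul, mul_one]
  exact le_max_left _ _

lemma exists_le_card_filter_lt_mul_one_sub {ι : Type*} (s : Finset ι) {c : ι → ℝ}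
    (hc : ∀ j ∈ s, 0 ≤ c j) {α : ℝ} (hα : 0 < α) :
    ∃ t ∈ Set.Icc 0 (1 - Real.exp (-(1 / α))),
      α * ((1 - Real.exp (-(1 / α))) * #s - ∑ j ∈ s, c j) ≤ #{j ∈ s | c j < t} * (1 - t) := by
  set T := 1 - Real.exp (-(1 / α)) with hT
  have hT0 : 0 < T := by
    have : Real.exp (-(1 / α)) < 1 := Real.exp_lt_one_iff.2 (by simp [hα])
    linarith
  have hT1 : T < 1 := by linarith [Real.exp_pos (-(1 / α))]
  have hlog : Real.log (1 - T) = -(1 / α) := by rw [hT, sub_sub_cancel, Real.log_exp]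
  set R := α * (T * #s - ∑ j ∈ s, c j) with hR
  -- Otherwise `#{j | c j < t} < R / (1 - t)` on `(0, T)`; integrating, the right side gives
  -- `R / α`, while each indicator contributes at least `T - c j`, so the left side is `≥ R / α`.
  by_contra! hlt
  set F : ℝ → ℝ := fun t => ∑ j ∈ s, (Set.Ioi (c j)).indicator (fun _ => (1 : ℝ)) t
  have hFcard : ∀ t, F t = #{j ∈ s | c j < t} := by
    intro t
    simp only [F, Set.indicator_apply, Set.mem_Ioi, natCast_card_filter]
  have hFint : IntervalIntegrable F volume 0 T := by
    simpa only [F, ← Finset.sum_apply] using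
      IntervalIntegrable.sum s fun j _ => intervalIntegrable_indicator_Ioi_one (c j) 0 T
  have hGint : IntervalIntegrable (fun t => R * (1 - t)⁻¹) volume 0 T := by
    refine ContinuousOn.intervalIntegrable (continuousOn_const.mul (ContinuousOn.inv₀
      (by fun_prop) fun t ht => ?_))
    rw [Set.uIcc_of_le hT0.le] at ht
    exact sub_ne_zero.2 (by linarith [ht.2])
  have hpos : 0 < ∫ t in (0 : ℝ)..T, (R * (1 - t)⁻¹ - F t) := by
    refine intervalIntegral.intervalIntegral_pos_of_pos_on (hGint.sub hFint) (fun t ht => ?_) hT0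
    have h1t : 0 < 1 - t := by linarith [ht.2]
    rw [sub_pos, hFcard, ← div_eq_mul_inv, lt_div_iff₀ h1t]
    exact hlt t ⟨ht.1.le, ht.2.le⟩
  have hFlow : T * #s - ∑ j ∈ s, c j ≤ ∫ t in (0 : ℝ)..T, F t := by
    rw [intervalIntegral.integral_finsetSum fun j _ => intervalIntegrable_indicator_Ioi_one _ _ _,
      mul_comm, ← nsmul_eq_mul, ← sum_const, ← sum_sub_distrib]
    exact sum_le_sum fun j hj => sub_le_integral_indicator_Ioi_one (hc j hj) hT0.le
  rw [intervalIntegral.integral_sub hGint hFint, intervalIntegral.integral_const_mul,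
    integral_inv_one_sub hT1, hlog, neg_neg] at hpos
  have : R * (1 / α) = T * #s - ∑ j ∈ s, c j := by rw [hR]; field_simp
  linarith

lemma exists_le_card_filter_lt_mul_mul_one_sub {ι : Type*} (s : Finset ι) {c : ι → ℝ}
    (hc : ∀ j ∈ s, 0 ≤ c j) {w : ℝ} (hw : 0 ≤ w) {α : ℝ} (hα : 0 < α) :
    ∃ t ∈ Set.Icc 0 (1 - Real.exp (-(1 / α))),
      α * (1 - Real.exp (-(1 / α))) * #s * w - α * ∑ j ∈ s, c j
        ≤ #{j ∈ s | c j < t * w} * (w * (1 - t)) := by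
  rcases hw.eq_or_lt with rfl | hw
  · refine ⟨0, ⟨le_rfl, by linarith [Real.exp_le_one_iff.2 (by simp [hα.le] : -(1 / α) ≤ 0)]⟩, ?_⟩
    have : 0 ≤ α * ∑ j ∈ s, c j := mul_nonneg hα.le (sum_nonneg hc)
    simp only [mul_zero, zero_mul, zero_sub]
    linarith
  · obtain ⟨t, ht, hle⟩ := exists_le_card_filter_lt_mul_one_sub s
      (fun j hj => div_nonneg (hc j hj) hw.le) hα
    refine ⟨t, ht, ?_⟩
    simp only [div_lt_iff₀ hw] at hle
    rw [← sum_div] at hle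
    have := mul_le_mul_of_nonneg_right hle hw.le
    rw [mul_sub, mul_div_assoc', sub_mul, div_mul_cancel₀ _ hw.ne'] at this
    linarith

end Averaging

theorem stmt8_general (n k : ℕ)
    -- the allocation rule
    (X : (Fin n → Bid k) → Fin n → ℕ)
    (hX : ∀ b, ValidAlloc b (X b))
    -- the valuation profile
    (v : Fin n → ℕ → ℝ) (hv : ∀ i, IsValuation k (v i))
    -- a welfare-optimal allocation
    (xopt : Fin n → ℕ) (hxoptk : (∑ i, xopt i) = k)
    -- an abstract utility, dominated by the discriminatory-pricing utility
    (u : Fin n → (Fin n → Bid k) → ℝ)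
    (hdom : ∀ i b, v i (X b i) - winSum (b i) (X b i) ≤ u i b)
    -- a bidder winning at least one unit in the optimum
    (i : Fin n)
    -- `τᵢ` minimizes `vᵢ(j)/j` over `j ∈ {1,…,xᵢ^v}`
    (τ : ℕ)
    (hτmin : ∀ j ∈ Finset.Icc 1 (xopt i), v i τ / (τ : ℝ) ≤ v i j / (j : ℝ))
    -- the bids of the other bidders
    (b : Fin n → Bid k) (hb : ∀ j, j ≠ i → StdBid (b j))
    (α : ℝ) (hα : 0 < α) :
    ∃ D : Measure (Bid k), IsProbabilityMeasure D ∧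
      (∀ᵐ b' ∂D, ∃ t : ℝ, 0 ≤ t ∧ t ≤ 1 - Real.exp (-(1 / α)) ∧
        b' = fun j : Fin k => if (j : ℕ) < xopt i then t * (v i τ / (τ : ℝ)) else 0) ∧
      α * (1 - Real.exp (-(1 / α))) * (xopt i : ℝ) * (v i τ / (τ : ℝ))
          - α * betaSum k (othersBids b i) (xopt i)
        ≤ ∫ b', u i (Function.update b i b') ∂D := by
  set m := xopt i
  set w := v i τ / (τ : ℝ)
  have hw : 0 ≤ w := div_nonneg ((hv i).2.1 τ) τ.cast_nonneg
  have hs := othersBids_nonneg hb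
  obtain ⟨t, ⟨ht0, htT⟩, hR⟩ := exists_le_card_filter_lt_mul_mul_one_sub (Icc 1 m)
    (fun j _ => betaBid_nonneg hs k j) hw hα
  refine ⟨Measure.dirac (uniformBid k m (t * w)), inferInstance, ?_, ?_⟩
  · rw [ae_dirac_eq]
    exact Filter.eventually_pure.2 ⟨t, ht0, htT, rfl⟩
  rw [integral_dirac]
  calc _ = α * (1 - Real.exp (-(1 / α))) * #(Icc 1 m) * w
        - α * ∑ j ∈ Icc 1 m, betaBid k (othersBids b i) j := by simp [betaSum]
    _ ≤ _ := hR
    _ ≤ _ := card_betaBid_lt_mul_le_uDisc_update_uniformBid hX (hv i) hs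
        (le_of_sum_eq hxoptk i) hw (htT.trans (by linarith [Real.exp_pos (-(1 / α))]))
        (natCast_mul_le_of_le_div (hv i).2.1 hτmin)
    _ ≤ _ := hdom i _

/-- **Key Lemma.** For any discriminatory-price-dominated multi-unit
auction, any bidder `i` winning `xᵢ^v ≥ 1` units in the optimum, any bid profile
`b₋ᵢ` of the other bidders and any `α > 0`, there is a randomized uniform deviation
(bidding `t · vᵢ(τᵢ)/τᵢ` with `t ∈ [0, 1 - e^{-1/α}]` on the first `xᵢ^v` entries)
whose expected utility is at least
`α(1 - e^{-1/α}) xᵢ^v vᵢ(τᵢ)/τᵢ - α ∑_{j=1}^{xᵢ^v} β_j(b₋ᵢ)`. -/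
theorem stmt8 (n k : ℕ) (hk : 1 ≤ k)
    -- the allocation rule
    (X : (Fin n → Bid k) → Fin n → ℕ)
    (hX : ∀ b, ValidAlloc b (X b))
    -- the valuation profile
    (v : Fin n → ℕ → ℝ) (hv : ∀ i, IsValuation k (v i))
    -- a welfare-optimal allocation
    (xopt : Fin n → ℕ) (hxoptk : (∑ i, xopt i) = k)
    (hxoptmax : ∀ y : Fin n → ℕ, (∑ i, y i) = k → SW v y ≤ SW v xopt)
    -- an abstract utility, dominated by the discriminatory-pricing utility
    (u : Fin n → (Fin n → Bid k) → ℝ)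
    (hdom : ∀ i b, v i (X b i) - winSum (b i) (X b i) ≤ u i b)
    -- a bidder winning at least one unit in the optimum
    (i : Fin n) (hi : 1 ≤ xopt i)
    -- `τᵢ` minimizes `vᵢ(j)/j` over `j ∈ {1,…,xᵢ^v}`
    (τ : ℕ) (hτmem : τ ∈ Finset.Icc 1 (xopt i))
    (hτmin : ∀ j ∈ Finset.Icc 1 (xopt i), v i τ / (τ : ℝ) ≤ v i j / (j : ℝ))
    -- the bids of the other bidders
    (b : Fin n → Bid k) (hb : ∀ j, j ≠ i → StdBid (b j))
    (α : ℝ) (hα : 0 < α) :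
    ∃ D : Measure (Bid k), IsProbabilityMeasure D ∧
      (∀ᵐ b' ∂D, ∃ t : ℝ, 0 ≤ t ∧ t ≤ 1 - Real.exp (-(1 / α)) ∧
        b' = fun j : Fin k => if (j : ℕ) < xopt i then t * (v i τ / (τ : ℝ)) else 0) ∧
      α * (1 - Real.exp (-(1 / α))) * (xopt i : ℝ) * (v i τ / (τ : ℝ))
          - α * betaSum k (othersBids b i) (xopt i)
        ≤ ∫ b', u i (Function.update b i b') ∂D :=
  stmt8_general n k X hX v hv xopt hxoptk u hdom i τ hτmin b hb α hα

end
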